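/- arXiv:2406.07045 — 2 statements merged into one kernel-verified Lean document; each statement's English description precedes it below -/
import Mathlib

section
/- Let v > 0 be a real number that is not a natural number. Then j^{v+1} · |C(v, j)| converges to 1/|Γ(-v)| as j → ∞, where Γ is the Gamma function. -/
open Filter

/-- Generalized binomial coefficient `C(v, j) = v(v-1)⋯(v-j+1)/j!` for real `v`. -/
noncomputable def genBinom (v : ℝ) (j : ℕ) : ℝ :=
  (∏ i ∈ Finset.range j, (v - i)) / (Nat.factorial j)

/-!
Euler's limit formula `Γ(s) = lim j^s j! / (s (s+1) ⋯ (s+j))` at `s = -v`: up to the sign `(-1)^j`,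
the denominator is `(j - v)` times the numerator `v (v-1) ⋯ (v-j+1)` of `C(v, j)`, so
`C(v, j) · GammaSeq (-v) j = ± j^(-v) / (j - v)` exactly. Hence `j^(v+1) |C(v, j)| · |GammaSeq (-v) j|`
equals `j / |j - v| → 1`, while `|GammaSeq (-v) j| → |Γ(-v)| ≠ 0`.
-/

open Topology Finset

theorem genBinom_mul_GammaSeq_neg {v : ℝ} (hv : ∀ n : ℕ, v ≠ n) (j : ℕ) :
    genBinom v j * Real.GammaSeq (-v) j = (-1) ^ j * (j : ℝ) ^ (-v) / (j - v) := by
  have hprod : ∏ i ∈ range j, (v - i) ≠ 0 :=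
    prod_ne_zero_iff.mpr fun i _ => sub_ne_zero.mpr (hv i)
  have hjv : (j : ℝ) - v ≠ 0 := sub_ne_zero.mpr (hv j).symm
  have hneg : ∏ i ∈ range j, (-v + i) = (-1) ^ j * ∏ i ∈ range j, (v - i) := by
    simp_rw [show ∀ i : ℕ, -v + i = -(v - i) by intro i; ring, prod_neg, card_range]
  rw [genBinom, Real.GammaSeq, prod_range_succ, hneg, neg_add_eq_sub]
  field_simp
  rw [← pow_mul, pow_mul', neg_one_sq, one_pow, mul_one]

theorem abs_genBinom_mul_abs_GammaSeq_neg {v : ℝ} (hv : ∀ n : ℕ, v ≠ n) {j : ℕ} (hj : j ≠ 0) :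
    (j : ℝ) ^ (v + 1) * |genBinom v j| * |Real.GammaSeq (-v) j| = j / |j - v| := by
  have hj0 : (0 : ℝ) < j := by positivity
  rw [mul_assoc, ← abs_mul, genBinom_mul_GammaSeq_neg hv, abs_div, abs_mul, abs_pow, abs_neg,
    abs_one, one_pow, one_mul, abs_of_pos (Real.rpow_pos_of_pos hj0 _), ← mul_div_assoc,
    ← Real.rpow_add hj0]
  simp

theorem tendsto_natCast_div_abs_sub (v : ℝ) :
    Tendsto (fun j : ℕ => (j : ℝ) / |j - v|) atTop (𝓝 1) := by
  refine (tendsto_natCast_div_add_atTop (-v)).congr' ?_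
  filter_upwards [(tendsto_natCast_atTop_atTop (R := ℝ)).eventually_gt_atTop v] with j hj
  rw [abs_of_pos (sub_pos.mpr hj), sub_eq_add_neg]

theorem genBinom_asymptotics_general (v : ℝ) (hnat : ¬∃ n : ℕ, v = n) :
    Tendsto (fun j : ℕ => (j : ℝ) ^ (v + 1) * |genBinom v j|) atTop
      (nhds (1 / |Real.Gamma (-v)|)) := by
  have hv : ∀ n : ℕ, v ≠ n := fun n h => hnat ⟨n, h⟩
  have hΓ : Real.Gamma (-v) ≠ 0 := Real.Gamma_ne_zero fun n h => hv n (neg_inj.mp h)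
  have hseq := (Real.GammaSeq_tendsto_Gamma (-v)).abs
  have hprod : Tendsto (fun j : ℕ => (j : ℝ) ^ (v + 1) * |genBinom v j| * |Real.GammaSeq (-v) j|)
      atTop (𝓝 1) :=
    (tendsto_natCast_div_abs_sub v).congr' <| (eventually_ne_atTop 0).mono fun j hj =>
      (abs_genBinom_mul_abs_GammaSeq_neg hv hj).symm
  refine (hprod.div hseq (abs_ne_zero.mpr hΓ)).congr' ?_
  filter_upwards [hseq.eventually_ne (abs_ne_zero.mpr hΓ)] with j hj
  exact mul_div_cancel_right₀ _ hj

/-- If `v > 0` is not a natural number, then `j^{v+1} · |C(v, j)| → 1/|Γ(-v)|`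
as `j → ∞`. -/
theorem genBinom_asymptotics (v : ℝ) (hv : 0 < v) (hnat : ¬∃ n : ℕ, v = n) :
    Tendsto (fun j : ℕ => (j : ℝ) ^ (v + 1) * |genBinom v j|) atTop
      (nhds (1 / |Real.Gamma (-v)|)) :=
  genBinom_asymptotics_general v hnat
end

section
/- Let v > 0 be real, ω a nonzero real number, and t ∈ ℝ. For each h > 0 the series ∑_{j=0}^{∞} (-1)^j C(v, j) exp(iω(t - jh)) converges absolutely, and h^{-v} ∑_{j=0}^{∞} (-1)^j C(v, j) exp(iω(t - jh)) converges to (iω)^v exp(iω t) as h → 0⁺, where (iω)^v is the principal complex power. -/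
/-!
Put `z = e^{-iωh}`. The Grünwald–Letnikov sum equals `e^{iωt} ∑ C(v,j) (-z)^j`, and since
`∑ |C(v,j)| < ∞` for `v > 0` the binomial series `∑ C(v,j) w^j = (1 + w)^v`, known on the open
unit disk, extends by continuity to `|w| = 1`. Hence the sum is `e^{iωt} (1 - z)^v`, and
`h^{-v} (1 - z)^v = ((1 - z)/h)^v → (iω)^v`, because `(1 - e^{-iωh})/h → iω` and `w ↦ w^v` is
continuous on the closed right half-plane when `v > 0`.
-/

open Filter

open Complex Metric Topology

namespace Complex

lemma ofReal_mul_cpow {a : ℝ} (ha : 0 ≤ a) (z s : ℂ) :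
    ((a : ℂ) * z) ^ s = (a : ℂ) ^ s * z ^ s := by
  rcases eq_or_ne s 0 with rfl | hs
  · simp
  rcases ha.eq_or_lt with rfl | ha'
  · simp [zero_cpow hs]
  rcases eq_or_ne z 0 with rfl | hz
  · simp [zero_cpow hs]
  have ha'' : (a : ℂ) ≠ 0 := ofReal_ne_zero.mpr ha'.ne'
  rw [cpow_def_of_ne_zero (mul_ne_zero ha'' hz), log_ofReal_mul ha' hz, ofReal_log ha,
    add_mul, exp_add, ← cpow_def_of_ne_zero ha'', ← cpow_def_of_ne_zero hz]

lemma continuousOn_one_add_cpow_closedBall {a : ℂ} (ha : 0 < a.re) :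
    ContinuousOn (fun w : ℂ => (1 + w) ^ a) (closedBall 0 1) := by
  intro w hw
  refine ((continuousAt_cpow_const_of_re_pos (Or.inl ?_) ha).comp
    (continuous_const.add continuous_id).continuousAt).continuousWithinAt
  have := (abs_le.mp ((abs_re_le_norm w).trans (mem_closedBall_zero_iff.mp hw))).1
  show 0 ≤ (1 + w).re
  simp only [add_re, one_re]
  linarith

lemma tendsto_one_sub_exp_neg_mul_div (c : ℂ) :
    Tendsto (fun h : ℝ => (1 - exp (-(c * h))) / h) (𝓝[≠] 0) (𝓝 c) := by
  have hd : HasDerivAt (fun h : ℝ => -exp (-(c * h))) c 0 := by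
    simpa using ((((hasDerivAt_id (0 : ℂ)).const_mul c).neg.cexp).neg).comp_ofReal
  refine (hasDerivAt_iff_tendsto_slope_zero.mp hd).congr fun h => ?_
  simp only [div_eq_inv_mul, real_smul, ofReal_inv, ofReal_zero, mul_zero, neg_zero, exp_zero,
    zero_add]
  ring

lemma norm_exp_I_mul_ofReal_mul (a b : ℝ) : ‖exp (I * a * b)‖ = 1 := by
  rw [mul_assoc, ← ofReal_mul, norm_exp_I_mul_ofReal]

lemma norm_exp_neg_I_mul_ofReal_mul (a b : ℝ) : ‖exp (-(I * a * b))‖ = 1 := by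
  simpa using norm_exp_I_mul_ofReal_mul (-a) b

end Complex

lemma genBinom_eq_choose (v : ℝ) (j : ℕ) : genBinom v j = Ring.choose v j := by
  rw [Ring.choose_eq_smul, genBinom, ← descPochhammer_eval_eq_prod_range, smul_eq_mul,
    ← descPochhammer_map (Int.castRingHom ℝ), Polynomial.eval_map,
    show Int.castRingHom ℝ = algebraMap ℤ ℝ from rfl, ← Polynomial.aeval_def,
    Polynomial.aeval_eq_smeval, div_eq_inv_mul]

lemma genBinom_succ_mul (v : ℝ) (j : ℕ) :
    genBinom v (j + 1) * (j + 1) = genBinom v j * (v - j) := by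
  have hfact : (j.factorial : ℝ) ≠ 0 := by positivity
  rw [genBinom, genBinom, Finset.prod_range_succ, Nat.factorial_succ, Nat.cast_mul]
  field_simp
  push_cast
  ring

lemma abs_genBinom_succ_mul {v : ℝ} {j : ℕ} (hj : v ≤ j) :
    |genBinom v (j + 1)| * (j + 1) = |genBinom v j| * (j - v) := by
  rw [← abs_of_pos (by positivity : (0 : ℝ) < j + 1), ← abs_mul, genBinom_succ_mul, abs_mul,
    abs_of_nonpos (sub_nonpos.mpr hj), neg_sub]

/-- For `j ≥ v` the recursion reads `v |C(v,j)| = d j - d (j+1)` with `d j = j |C(v,j)| ≥ 0`,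
so the tail partial sums telescope and stay below `d N / v`. -/
lemma summable_abs_genBinom {v : ℝ} (hv : 0 < v) : Summable fun j => |genBinom v j| := by
  set N := ⌈v⌉₊
  set d : ℕ → ℝ := fun j => j * |genBinom v j|
  have htelescope : ∀ k, v * |genBinom v (N + k)| = d (N + k) - d (N + k + 1) := fun k => by
    have hle : v ≤ ((N + k : ℕ) : ℝ) :=
      (Nat.le_ceil v).trans (by exact_mod_cast N.le_add_right k)
    have := abs_genBinom_succ_mul hle
    simp only [d]
    push_cast at this ⊢
    linarith
  have hbound : ∀ n, ∑ k ∈ Finset.range n, |genBinom v (N + k)| ≤ d N / v := fun n => by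
    have hsum : v * ∑ k ∈ Finset.range n, |genBinom v (N + k)| = d N - d (N + n) := by
      rw [Finset.mul_sum, Finset.sum_congr rfl fun k _ => htelescope k]
      exact Finset.sum_range_sub' (fun k => d (N + k)) n
    have : 0 ≤ d (N + n) := by positivity
    rw [le_div_iff₀ hv]
    linarith
  refine (summable_nat_add_iff N).mp ?_
  simpa only [add_comm] using summable_of_sum_range_le (fun _ => abs_nonneg _) hbound

lemma hasSum_genBinom_mul_pow_of_norm_lt_one (v : ℝ) {w : ℂ} (hw : ‖w‖ < 1) :
    HasSum (fun j => (genBinom v j : ℂ) * w ^ j) ((1 + w) ^ (v : ℂ)) := by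
  have := (one_add_cpow_hasFPowerSeriesOnBall_zero (a := (v : ℂ))).hasSum (y := w)
    (by simpa [← ofReal_norm] using hw)
  simpa [FormalMultilinearSeries.coeff_ofScalars, binomialSeries, genBinom_eq_choose,
    ofReal_choose, mul_comm] using this

lemma norm_genBinom_mul_pow_le (v : ℝ) (j : ℕ) {w : ℂ} (hw : ‖w‖ ≤ 1) :
    ‖(genBinom v j : ℂ) * w ^ j‖ ≤ |genBinom v j| := by
  rw [norm_mul, norm_pow, norm_real, Real.norm_eq_abs]
  exact mul_le_of_le_one_right (abs_nonneg _) (pow_le_one₀ (norm_nonneg w) hw)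

lemma hasSum_genBinom_mul_pow {v : ℝ} (hv : 0 < v) {w : ℂ} (hw : ‖w‖ ≤ 1) :
    HasSum (fun j => (genBinom v j : ℂ) * w ^ j) ((1 + w) ^ (v : ℂ)) := by
  have hsum : Set.EqOn (fun z : ℂ => ∑' j, (genBinom v j : ℂ) * z ^ j)
      (fun z => (1 + z) ^ (v : ℂ)) (closedBall 0 1) :=
    Set.EqOn.of_subset_closure
      (fun z hz => (hasSum_genBinom_mul_pow_of_norm_lt_one v (mem_ball_zero_iff.mp hz)).tsum_eq)
      (continuousOn_tsum (fun j => (continuous_const.mul (continuous_pow j)).continuousOn)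
        (summable_abs_genBinom hv)
        fun j z hz => norm_genBinom_mul_pow_le v j (mem_closedBall_zero_iff.mp hz))
      (continuousOn_one_add_cpow_closedBall (by simpa using hv)) ball_subset_closedBall
      (closure_ball 0 one_ne_zero).ge
  have hS := (Summable.of_norm_bounded (summable_abs_genBinom hv)
    fun j => norm_genBinom_mul_pow_le v j hw).hasSum
  rwa [show ∑' j, (genBinom v j : ℂ) * w ^ j = (1 + w) ^ (v : ℂ) from
    hsum (mem_closedBall_zero_iff.mpr hw)] at hS

lemma ofReal_rpow_neg_mul_cpow {h : ℝ} (hh : 0 < h) (v : ℝ) (w : ℂ) :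
    ((h ^ (-v) : ℝ) : ℂ) * w ^ (v : ℂ) = (w / h) ^ (v : ℂ) := by
  rw [Real.rpow_neg hh.le, ← Real.inv_rpow hh.le, ofReal_cpow (inv_nonneg.mpr hh.le),
    div_eq_inv_mul, ← ofReal_inv, ofReal_mul_cpow (inv_nonneg.mpr hh.le)]

lemma grunwaldLetnikov_exp_term_eq (v ω t h : ℝ) (j : ℕ) :
    (-1 : ℂ) ^ j * genBinom v j * exp (I * ω * (t - j * h)) =
      exp (I * ω * t) * (genBinom v j * (-exp (-(I * ω * h))) ^ j) := by
  have hexponent : I * ω * (t - j * h) = I * ω * t + j * -(I * ω * h) := by ring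
  rw [neg_pow (exp _), ← exp_nat_mul, hexponent, exp_add]
  ring

lemma norm_grunwaldLetnikov_exp_term (v ω t h : ℝ) (j : ℕ) :
    ‖(-1 : ℂ) ^ j * genBinom v j * exp (I * ω * (t - j * h))‖ = |genBinom v j| := by
  rw [grunwaldLetnikov_exp_term_eq, norm_mul, norm_mul, norm_pow, norm_neg,
    norm_exp_neg_I_mul_ofReal_mul, norm_real, one_pow, mul_one, Real.norm_eq_abs,
    norm_exp_I_mul_ofReal_mul, one_mul]

lemma hasSum_grunwaldLetnikov_exp {v : ℝ} (hv : 0 < v) (ω t h : ℝ) :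
    HasSum (fun j : ℕ => (-1 : ℂ) ^ j * genBinom v j * exp (I * ω * (t - j * h)))
      ((1 - exp (-(I * ω * h))) ^ (v : ℂ) * exp (I * ω * t)) := by
  simp only [grunwaldLetnikov_exp_term_eq, mul_comm _ (exp (I * ω * t))]
  refine (hasSum_genBinom_mul_pow hv ?_).mul_left _
  rw [norm_neg, norm_exp_neg_I_mul_ofReal_mul]

theorem GL_frac_deriv_of_exponential_general (v ω t : ℝ) (hv : 0 < v) :
    (∀ h : ℝ, 0 < h →
        Summable (fun j : ℕ =>
          ‖(-1 : ℂ) ^ j * (genBinom v j : ℂ) *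
            Complex.exp (Complex.I * (ω : ℂ) * ((t : ℂ) - (j : ℂ) * (h : ℂ)))‖)) ∧
      Tendsto
        (fun h : ℝ =>
          ((h ^ (-v) : ℝ) : ℂ) *
            ∑' j : ℕ, (-1 : ℂ) ^ j * (genBinom v j : ℂ) *
              Complex.exp (Complex.I * (ω : ℂ) * ((t : ℂ) - (j : ℂ) * (h : ℂ))))
        (nhdsWithin 0 (Set.Ioi 0))
        (nhds ((Complex.I * (ω : ℂ)) ^ (v : ℂ) * Complex.exp (Complex.I * (ω : ℂ) * (t : ℂ)))) := by
  refine ⟨fun h _ => (summable_abs_genBinom hv).congr fun j =>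
    (norm_grunwaldLetnikov_exp_term v ω t h j).symm, ?_⟩
  have hquot : Tendsto (fun h : ℝ => (1 - exp (-(I * ω * h))) / h) (𝓝[>] 0) (𝓝 (I * ω)) :=
    (tendsto_one_sub_exp_neg_mul_div _).mono_left (nhdsWithin_mono 0 fun _ hx => ne_of_gt hx)
  have hcpow : ContinuousAt (fun w : ℂ => w ^ (v : ℂ)) (I * ω) :=
    continuousAt_cpow_const_of_re_pos (Or.inl (by simp)) (by simpa using hv)
  refine ((hcpow.tendsto.comp hquot).mul_const _).congr' ?_
  filter_upwards [self_mem_nhdsWithin] with h (hh : 0 < h)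
  rw [(hasSum_grunwaldLetnikov_exp hv ω t h).tsum_eq, ← mul_assoc,
    ofReal_rpow_neg_mul_cpow hh, Function.comp_apply]

/-- Complex exponentials are eigenfunctions of the Grünwald–Letnikov fractional
derivative of order `v > 0`, with eigenvalue `(iω)^v`: for each `h > 0` the series
`∑_j (-1)^j C(v,j) e^{iω(t - jh)}` converges absolutely, and
`h^{-v} ∑_j (-1)^j C(v,j) e^{iω(t - jh)} → (iω)^v e^{iωt}` as `h → 0⁺`. -/
theorem GL_frac_deriv_of_exponential (v ω t : ℝ) (hv : 0 < v) (hω : ω ≠ 0) :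
    (∀ h : ℝ, 0 < h →
        Summable (fun j : ℕ =>
          ‖(-1 : ℂ) ^ j * (genBinom v j : ℂ) *
            Complex.exp (Complex.I * (ω : ℂ) * ((t : ℂ) - (j : ℂ) * (h : ℂ)))‖)) ∧
      Tendsto
        (fun h : ℝ =>
          ((h ^ (-v) : ℝ) : ℂ) *
            ∑' j : ℕ, (-1 : ℂ) ^ j * (genBinom v j : ℂ) *
              Complex.exp (Complex.I * (ω : ℂ) * ((t : ℂ) - (j : ℂ) * (h : ℂ))))
        (nhdsWithin 0 (Set.Ioi 0))
        (nhds ((Complex.I * (ω : ℂ)) ^ (v : ℂ) * Complex.exp (Complex.I * (ω : ℂ) * (t : ℂ)))) :=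
  GL_frac_deriv_of_exponential_general v ω t hv
end
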